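/- Fix L > 0, s ∈ ℤ', and σ : ℤ' → [0,1] with Σ_{l<0} σ(l) < ∞. If Y and Ỹ both solve the discrete Riemann–Hilbert problem with data W (conditions (a), (b), (c) below), then Y(z) = Ỹ(z) for all z ∈ ℂ \ ℤ'. -/

import Mathlib

open scoped Topology

/-!
Half-integers `ℤ' = ℤ + 1/2` are parametrized by `ℤ`: the half-integer `a = m + 1/2`
corresponds to `m : ℤ`; `σ : ℤ' → [0,1]` is represented as `σ : ℤ → ℝ` and `s = t + 1/2` by
`t : ℤ`.  Thus `σ(a - s - 1/2)` reads `σ (m - t - 1)`, `J_{a-1/2} = J_m`, `J_{a+1/2} = J_{m+1}`,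
and `K^Be(a,a) = ∑_{j≥0} J_{m+j+1}(2L)²`.  Holomorphy, analyticity and the decay condition for
matrix-valued functions are expressed entrywise (any matrix norm gives an equivalent
formulation).
-/
noncomputable def besselJnat (L : ℝ) (n : ℕ) : ℝ :=
  ∑' j : ℕ, (-1 : ℝ) ^ j * L ^ (2 * j + n) / (Nat.factorial j * Nat.factorial (n + j))

noncomputable def besselJint (L : ℝ) (n : ℤ) : ℝ :=
  if 0 ≤ n then besselJnat L n.toNat else (-1 : ℝ) ^ (-n).toNat * besselJnat L (-n).toNat

/-- Diagonal of the discrete Bessel kernel, `K^Be(m + 1/2, m + 1/2)`. -/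
noncomputable def KBeDiag (L : ℝ) (m : ℤ) : ℝ :=
  ∑' j : ℕ, besselJint L (m + j + 1) * besselJint L (m + j + 1)

/-- `f(a) = √σ(a-s-1/2) (J_{a-1/2}(2L), L J_{a+1/2}(2L))ᵀ` for `a = m + 1/2`. -/
noncomputable def fvec (σ : ℤ → ℝ) (L : ℝ) (t m : ℤ) : Fin 2 → ℝ :=
  ![Real.sqrt (σ (m - t - 1)) * besselJint L m,
    Real.sqrt (σ (m - t - 1)) * (L * besselJint L (m + 1))]

/-- `g(a) = √σ(a-s-1/2) (L J_{a+1/2}(2L), -J_{a-1/2}(2L))ᵀ` for `a = m + 1/2`. -/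
noncomputable def gvec (σ : ℤ → ℝ) (L : ℝ) (t m : ℤ) : Fin 2 → ℝ :=
  ![Real.sqrt (σ (m - t - 1)) * (L * besselJint L (m + 1)),
    Real.sqrt (σ (m - t - 1)) * (-besselJint L m)]

/-- `W(a) = f(a) g(a)ᵀ / (1 - σ(a-s-1/2) K^Be(a,a))` for `a = m + 1/2`. -/
noncomputable def Wmat (σ : ℤ → ℝ) (L : ℝ) (t m : ℤ) : Matrix (Fin 2) (Fin 2) ℂ :=
  fun i j => ((fvec σ L t m i * gvec σ L t m j / (1 - σ (m - t - 1) * KBeDiag L m) : ℝ) : ℂ)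

/-- `Y` solves the discrete Riemann–Hilbert problem with data `W`:
(a) `Y` is holomorphic on `ℂ \ ℤ'`;
(b) for every `a ∈ ℤ'`, `z ↦ Y(z)(I - W(a)/(z-a))` extends holomorphically near `a`;
(c) `sup_{|z|=n} |Y(z) - I| → 0` as `n → ∞` through positive integers. -/
def SolvesRH (W : ℤ → Matrix (Fin 2) (Fin 2) ℂ) (Y : ℂ → Matrix (Fin 2) (Fin 2) ℂ) : Prop :=
  (∀ i j, DifferentiableOn ℂ (fun z => Y z i j) {z : ℂ | ∀ m : ℤ, z ≠ (m : ℂ) + 1 / 2}) ∧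
  (∀ m : ℤ, ∃ h : ℂ → Matrix (Fin 2) (Fin 2) ℂ,
      (∀ i j, AnalyticAt ℂ (fun z => h z i j) ((m : ℂ) + 1 / 2)) ∧
      ∀ᶠ z in 𝓝[≠] ((m : ℂ) + 1 / 2),
        h z = Y z * (1 - (z - ((m : ℂ) + 1 / 2))⁻¹ • W m)) ∧
  (∀ ε : ℝ, 0 < ε → ∃ N : ℕ, 0 < N ∧ ∀ n : ℕ, N ≤ n → ∀ z : ℂ, ‖z‖ = n →
      ∀ i j, ‖(Y z - 1) i j‖ < ε)


/-!
Every jump matrix `W(a)` has trace and determinant zero, so `det (I - W(a)/(z-a)) = 1` and the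
jumps cancel in `Y · adj Y'` for any two solutions `Y, Y'`. The entries of `Y · adj Y'` therefore
have removable singularities on `ℤ'` and extend to entire functions; these tend to the entries of
`I` along the circles `|z| = n`, so by the maximum modulus principle they are constant. Applied to
`(Y, Y')` and `(Y', Y')` this gives `Y · adj Y' = I = Y' · adj Y'`, hence `Y = Y'`.
-/

open Filter Topology

noncomputable def integerCircles : Filter ℂ :=
  comap (fun z => ‖z‖) (map ((↑) : ℕ → ℝ) atTop)

theorem eventually_integerCircles_iff {p : ℂ → Prop} :
    (∀ᶠ z in integerCircles, p z) ↔ ∃ N : ℕ, ∀ n ≥ N, ∀ z : ℂ, ‖z‖ = n → p z := by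
  simp [integerCircles, eventually_comap, eventually_map, eventually_atTop]

section EntireFunctions

variable {E : Type*} [NormedAddCommGroup E] [NormedSpace ℂ E]

theorem exists_differentiable_eqOn_of_removable {U : Set ℂ} (hU : U ∈ codiscrete ℂ)
    {u : ℂ → E} (hu : DifferentiableOn ℂ u U)
    (hrem : ∀ a ∉ U, ∃ g : ℂ → E, AnalyticAt ℂ g a ∧ u =ᶠ[𝓝[≠] a] g) :
    ∃ v : ℂ → E, Differentiable ℂ v ∧ Set.EqOn v u U := by
  classical
  choose! g hg hug using hrem
  have hU_nhdsNE : ∀ a, U ∈ 𝓝[≠] a := fun a => by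
    simpa using disjoint_principal_right.mp (mem_codiscrete.mp hU a)
  refine ⟨U.piecewise u (fun z => g z z), fun a => ?_, fun z hz => U.piecewise_eq_of_mem _ _ hz⟩
  by_cases ha : a ∈ U
  · have hUa : U ∈ 𝓝 a := Set.insert_eq_of_mem ha ▸ insert_mem_nhds_iff.mpr (hU_nhdsNE a)
    exact (hu.differentiableAt hUa).congr_of_eventuallyEq
      (Filter.mem_of_superset hUa fun z hz => U.piecewise_eq_of_mem _ _ hz)
  · refine (hg a ha).differentiableAt.congr_of_eventuallyEq
      (eventuallyEq_nhds_of_eventuallyEq_nhdsNE ?_ (U.piecewise_eq_of_notMem _ _ ha))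
    filter_upwards [hU_nhdsNE a, hug a ha] with z hz hz'
    rw [U.piecewise_eq_of_mem _ _ hz, hz']

theorem eq_of_differentiable_of_tendsto_integerCircles {v : ℂ → E} {c : E}
    (hv : Differentiable ℂ v) (hc : Tendsto v integerCircles (𝓝 c)) (z : ℂ) : v z = c := by
  refine eq_of_forall_dist_le fun ε hε => ?_
  obtain ⟨N, hN⟩ := eventually_integerCircles_iff.mp (Metric.tendsto_nhds.mp hc ε hε)
  set n := max N (⌊‖z‖⌋₊ + 1)
  have hzn : ‖z‖ < n := (Nat.lt_floor_add_one _).trans_le (by exact_mod_cast le_max_right _ _)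
  have hn : (n : ℝ) ≠ 0 := ((norm_nonneg z).trans_lt hzn).ne'
  rw [dist_eq_norm]
  refine Complex.norm_le_of_forall_mem_frontier_norm_le (U := Metric.ball 0 n)
    Metric.isBounded_ball (hv.sub_const c).diffContOnCl (fun w hw => ?_)
    (subset_closure (by simpa using hzn))
  rw [frontier_ball 0 hn, mem_sphere_zero_iff_norm] at hw
  exact (dist_eq_norm (v w) c ▸ hN n (le_max_left _ _) w hw).le

end EntireFunctions

namespace Matrix

variable {𝕜 : Type*} [NontriviallyNormedField 𝕜] {n : Type*} [Fintype n] {x : 𝕜}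

theorem analyticAt_mul_apply {l p : Type*} {A : 𝕜 → Matrix l n 𝕜} {B : 𝕜 → Matrix n p 𝕜}
    (hA : ∀ i j, AnalyticAt 𝕜 (fun z => A z i j) x)
    (hB : ∀ i j, AnalyticAt 𝕜 (fun z => B z i j) x) (i : l) (j : p) :
    AnalyticAt 𝕜 (fun z => (A z * B z) i j) x := by
  simp only [mul_apply]
  exact Finset.analyticAt_fun_sum _ fun k _ => (hA i k).mul (hB k j)

variable [DecidableEq n] {B : 𝕜 → Matrix n n 𝕜}

theorem analyticAt_det (hB : ∀ i j, AnalyticAt 𝕜 (fun z => B z i j) x) :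
    AnalyticAt 𝕜 (fun z => (B z).det) x := by
  simp only [det_apply']
  exact Finset.analyticAt_fun_sum _ fun σ _ =>
    analyticAt_const.mul (Finset.analyticAt_fun_prod _ fun i _ => hB (σ i) i)

theorem analyticAt_adjugate_apply (hB : ∀ i j, AnalyticAt 𝕜 (fun z => B z i j) x) (i j : n) :
    AnalyticAt 𝕜 (fun z => (B z).adjugate i j) x := by
  simp only [adjugate_apply]
  refine analyticAt_det fun k l => ?_
  by_cases hk : k = j
  · simp only [hk, updateRow_self, analyticAt_const]
  · simpa only [updateRow_ne hk] using hB k l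

theorem det_one_sub_smul_of_trace_eq_zero {R : Type*} [CommRing R]
    {A : Matrix (Fin 2) (Fin 2) R} (htr : A.trace = 0) (hdet : A.det = 0) (c : R) :
    (1 - c • A).det = 1 := by
  rw [trace_fin_two] at htr
  rw [det_fin_two] at hdet ⊢
  simp only [sub_apply, smul_apply, one_fin_two, of_apply, cons_val', cons_val_zero, cons_val_one,
    empty_val', cons_val_fin_one, smul_eq_mul]
  linear_combination (-c) * htr + c ^ 2 * hdet

end Matrix

theorem trace_Wmat (σ : ℤ → ℝ) (L : ℝ) (t m : ℤ) : (Wmat σ L t m).trace = 0 := by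
  simp only [Matrix.trace_fin_two, Wmat, fvec, gvec, Matrix.cons_val_zero, Matrix.cons_val_one,
    ← Complex.ofReal_add, Complex.ofReal_eq_zero, ← add_div]
  exact div_eq_zero_iff.mpr (Or.inl (by ring))

theorem det_Wmat (σ : ℤ → ℝ) (L : ℝ) (t m : ℤ) : (Wmat σ L t m).det = 0 := by
  simp only [Matrix.det_fin_two, Wmat, fvec, gvec, Matrix.cons_val_zero, Matrix.cons_val_one,
    ← Complex.ofReal_mul, ← Complex.ofReal_sub, Complex.ofReal_eq_zero,
    div_mul_div_comm, ← sub_div]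
  exact div_eq_zero_iff.mpr (Or.inl (by ring))

theorem setOf_ne_halfInteger_mem_codiscrete :
    {z : ℂ | ∀ m : ℤ, z ≠ (m : ℂ) + 1 / 2} ∈ codiscrete ℂ := by
  have hemb : IsClosedEmbedding (fun m : ℤ => (m : ℂ) + 1 / 2) :=
    (Homeomorph.addRight (1 / 2 : ℂ)).isClosedEmbedding.comp
      (Complex.isometry_ofReal.isClosedEmbedding.comp Int.isClosedEmbedding_coe_real)
  have hS : {z : ℂ | ∀ m : ℤ, z ≠ (m : ℂ) + 1 / 2} = (Set.range fun m : ℤ => (m : ℂ) + 1 / 2)ᶜ := by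
    ext z
    simp [eq_comm]
  rw [hS, compl_mem_codiscrete_iff]
  exact ⟨hemb.isClosed_range, hemb.isInducing.isDiscrete_range⟩

theorem eventually_integerCircles_ne_halfInteger :
    ∀ᶠ z in integerCircles, ∀ m : ℤ, z ≠ (m : ℂ) + 1 / 2 := by
  refine eventually_integerCircles_iff.mpr ⟨0, fun n _ z hz m hzm => ?_⟩
  have hnorm : ‖(m : ℂ) + 1 / 2‖ = |((2 * m + 1 : ℤ) : ℝ)| / 2 := by
    rw [show (m : ℂ) + 1 / 2 = (((2 * m + 1 : ℤ) : ℝ) / 2 : ℝ) by push_cast; ring,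
      Complex.norm_real, Real.norm_eq_abs, abs_div, abs_two]
  rw [hzm, hnorm, div_eq_iff two_ne_zero, ← Int.cast_abs] at hz
  have : |2 * m + 1| = n * 2 := by exact_mod_cast hz
  rcases abs_cases (2 * m + 1) with ⟨h, -⟩ | ⟨h, -⟩ <;> omega

namespace SolvesRH

variable {W : ℤ → Matrix (Fin 2) (Fin 2) ℂ} {Y Y' : ℂ → Matrix (Fin 2) (Fin 2) ℂ}

theorem analyticAt (hY : SolvesRH W Y) {z : ℂ} (hz : ∀ m : ℤ, z ≠ (m : ℂ) + 1 / 2)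
    (i j : Fin 2) : AnalyticAt ℂ (fun w => Y w i j) z :=
  (hY.1 i j).analyticAt
    (isOpen_iff_mem_nhds.mp (mem_codiscrete'.mp setOf_ne_halfInteger_mem_codiscrete).1 z hz)

theorem tendsto_integerCircles (hY : SolvesRH W Y) : Tendsto Y integerCircles (𝓝 1) := by
  refine tendsto_pi_nhds.mpr fun i => tendsto_pi_nhds.mpr fun j => ?_
  refine Metric.tendsto_nhds.mpr fun ε hε => eventually_integerCircles_iff.mpr ?_
  obtain ⟨N, -, hN⟩ := hY.2.2 ε hε
  exact ⟨N, fun n hn z hz => by simpa [dist_eq_norm] using hN n hn z hz i j⟩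

theorem mul_adjugate_eq_one (hW : ∀ m (c : ℂ), (1 - c • W m).det = 1)
    (hY : SolvesRH W Y) (hY' : SolvesRH W Y') {z : ℂ} (hz : ∀ m : ℤ, z ≠ (m : ℂ) + 1 / 2) :
    Y z * (Y' z).adjugate = 1 := by
  ext i j
  have hrem : ∀ a ∉ {z : ℂ | ∀ m : ℤ, z ≠ (m : ℂ) + 1 / 2}, ∃ g : ℂ → ℂ, AnalyticAt ℂ g a ∧
      (fun w => (Y w * (Y' w).adjugate) i j) =ᶠ[𝓝[≠] a] g := by
    intro a ha
    obtain ⟨m, rfl⟩ : ∃ m : ℤ, a = (m : ℂ) + 1 / 2 := by simpa using ha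
    obtain ⟨h, hh, hYh⟩ := hY.2.1 m
    obtain ⟨h', hh', hYh'⟩ := hY'.2.1 m
    refine ⟨fun w => (h w * (h' w).adjugate) i j,
      Matrix.analyticAt_mul_apply hh (Matrix.analyticAt_adjugate_apply hh') i j, ?_⟩
    filter_upwards [hYh, hYh'] with w hw hw'
    set M := 1 - (w - ((m : ℂ) + 1 / 2))⁻¹ • W m
    have hM : M * M.adjugate = 1 := by rw [Matrix.mul_adjugate, hW, one_smul]
    rw [hw, hw', Matrix.adjugate_mul_distrib, mul_assoc, ← mul_assoc M, hM, one_mul]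
  obtain ⟨v, hv, hvu⟩ := exists_differentiable_eqOn_of_removable
    setOf_ne_halfInteger_mem_codiscrete
    (fun w hw => (Matrix.analyticAt_mul_apply (hY.analyticAt hw)
      (Matrix.analyticAt_adjugate_apply (hY'.analyticAt hw)) i j).differentiableWithinAt)
    hrem
  have hlim : Tendsto (fun w => Y w * (Y' w).adjugate) integerCircles (𝓝 1) := by
    simpa using hY.tendsto_integerCircles.mul
      ((continuous_id.matrix_adjugate.tendsto 1).comp hY'.tendsto_integerCircles)
  refine (hvu hz).symm.trans (eq_of_differentiable_of_tendsto_integerCircles hv ?_ z)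
  refine Tendsto.congr' ?_ ((continuous_apply_apply i j).tendsto _ |>.comp hlim)
  filter_upwards [eventually_integerCircles_ne_halfInteger] with w hw
  exact (hvu hw).symm

end SolvesRH

theorem discreteRH_uniqueness_general (σ : ℤ → ℝ) (L : ℝ) (t : ℤ)
    (Y Y' : ℂ → Matrix (Fin 2) (Fin 2) ℂ)
    (hY : SolvesRH (Wmat σ L t) Y) (hY' : SolvesRH (Wmat σ L t) Y') :
    ∀ z : ℂ, (∀ m : ℤ, z ≠ (m : ℂ) + 1 / 2) → Y z = Y' z := by
  intro z hz
  have hW : ∀ m (c : ℂ), (1 - c • Wmat σ L t m).det = 1 := fun m =>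
    Matrix.det_one_sub_smul_of_trace_eq_zero (trace_Wmat σ L t m) (det_Wmat σ L t m)
  have hYY' := hY.mul_adjugate_eq_one hW hY' hz
  have hY'Y' := hY'.mul_adjugate_eq_one hW hY' hz
  calc Y z = Y z * ((Y' z).adjugate * Y' z) := by rw [mul_eq_one_comm.mp hY'Y', mul_one]
    _ = Y' z := by rw [← mul_assoc, hYY', one_mul]

/-- uniqueness for the discrete Riemann–Hilbert problem: two solutions of
the discrete RH problem with data `W` agree on `ℂ \ ℤ'`. -/
theorem discreteRH_uniqueness (σ : ℤ → ℝ) (hσ : ∀ k : ℤ, σ k ∈ Set.Icc (0 : ℝ) 1)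
    (hsum : Summable (fun k : {k : ℤ // k < 0} => σ k)) (L : ℝ) (hL : 0 < L) (t : ℤ)
    (Y Y' : ℂ → Matrix (Fin 2) (Fin 2) ℂ)
    (hY : SolvesRH (Wmat σ L t) Y) (hY' : SolvesRH (Wmat σ L t) Y') :
    ∀ z : ℂ, (∀ m : ℤ, z ≠ (m : ℂ) + 1 / 2) → Y z = Y' z :=
  discreteRH_uniqueness_general σ L t Y Y' hY hY'
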